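/- The Möbius function of the lattice ℰ^n of embedded subsets of an n-set satisfies the recursion μ_{ℰ^n} = −(μ_{𝒫^n} + (n−1)·μ_{ℰ^{n−1}}), where μ_{ℰ^m} = μ_{ℰ^m}(bottom, top) and μ_{𝒫^m} = μ_{𝒫^m}(bottom, top) = (−1)^{m−1}(m−1)! is the Möbius function value of the partition lattice of an m-set, with the conventions μ_{ℰ^0} = μ_{𝒫^0} = 1. -/

import Mathlib

open scoped BigOperators

/-- `modp n A` is the modular partition `P^A_⊥` of `Fin n` whose unique (possibly)
non-singleton block is `A`, all other blocks being singletons. -/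
def modp (n : ℕ) (A : Set (Fin n)) : Setoid (Fin n) where
  r x y := x = y ∨ (x ∈ A ∧ y ∈ A)
  iseqv := by
    refine ⟨fun _ => Or.inl rfl, ?_, ?_⟩
    · rintro x y (rfl | ⟨hx, hy⟩)
      · exact Or.inl rfl
      · exact Or.inr ⟨hy, hx⟩
    · rintro x y z (rfl | ⟨hx, hy⟩) h
      · exact h
      · rcases h with rfl | ⟨hy', hz⟩
        · exact Or.inr ⟨hx, hy⟩
        · exact Or.inr ⟨hx, hz⟩

/-- The product `X^N = 2^N × 𝒫^N` of the subset lattice and the partition lattice,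
ordered componentwise. -/
abbrev XN (n : ℕ) := Set (Fin n) × Setoid (Fin n)

/-- The closure operator `cl` on `X^N`:  `cl(∅,P) = (∅,P)` and, for `A ≠ ∅`,
`cl(A,P) = (Ā, P ⊔ P^A_⊥)` where `Ā` is the block of `P ⊔ P^A_⊥` containing `A`. -/
def EmbClosure (n : ℕ) (x : XN n) : XN n :=
  ({y | ∃ a ∈ x.1, (x.2 ⊔ modp n x.1) y a}, x.2 ⊔ modp n x.1)

/-- An embedded subset is a pair that coincides with its closure. -/
def IsEmbedded (n : ℕ) (x : XN n) : Prop := EmbClosure n x = x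

/-- The lattice `ℰ^N` of embedded subsets, with the induced order. -/
abbrev Emb (n : ℕ) := {x : XN n // IsEmbedded n x}

lemma modp_le_of_subsingleton {n : ℕ} {A : Set (Fin n)} (h : A.Subsingleton)
    (Q : Setoid (Fin n)) : modp n A ≤ Q := by
  rw [Setoid.le_def]
  intro x y hxy
  rcases hxy with rfl | ⟨hx, hy⟩
  · exact Q.refl' x
  · obtain rfl := h hx hy
    exact Q.refl' x

lemma modp_eq_bot_of_subsingleton {n : ℕ} {A : Set (Fin n)} (h : A.Subsingleton) :
    modp n A = ⊥ :=
  le_antisymm (modp_le_of_subsingleton h ⊥) bot_le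

lemma embedded_empty (n : ℕ) (Q : Setoid (Fin n)) : IsEmbedded n (∅, Q) := by
  unfold IsEmbedded EmbClosure
  refine Prod.ext ?_ ?_
  · simp
  · simpa using sup_eq_left.mpr (modp_le_of_subsingleton Set.subsingleton_empty Q)

lemma embedded_univ_top (n : ℕ) : IsEmbedded n (Set.univ, ⊤) := by
  unfold IsEmbedded EmbClosure
  refine Prod.ext ?_ ?_
  · ext y
    simp only [Set.mem_setOf_eq, Set.mem_univ, iff_true]
    exact ⟨y, trivial, Setoid.refl' _ y⟩
  · exact sup_eq_left.mpr le_top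

lemma embedded_singleton (n : ℕ) (i : Fin n) : IsEmbedded n ({i}, ⊥) := by
  have hb : modp n ({i} : Set (Fin n)) = ⊥ :=
    modp_eq_bot_of_subsingleton Set.subsingleton_singleton
  unfold IsEmbedded EmbClosure
  refine Prod.ext ?_ ?_
  · ext y
    simp only [Set.mem_setOf_eq, hb, sup_idem, Set.mem_singleton_iff]
    constructor
    · rintro ⟨a, ha, hrel⟩
      subst ha
      have h' : ((⊥ : Setoid (Fin n)) ⊔ modp n {a}) y a := hrel
      rw [hb, sup_idem] at h'
      first
        | exact h'
        | simpa [Setoid.bot_def] using h'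
    · rintro rfl
      exact ⟨y, rfl, Setoid.refl' _ y⟩
  · simp [hb]

/-- The bottom element `(∅, P_⊥)` of `ℰ^N`. -/
def botE (n : ℕ) : Emb n := ⟨(∅, ⊥), embedded_empty n ⊥⟩

/-- The top element `(N, P^⊤)` of `ℰ^N`. -/
def topE (n : ℕ) : Emb n := ⟨(Set.univ, ⊤), embedded_univ_top n⟩

/-- The atom `({i}, P_⊥)` of `ℰ^N`. -/
def atomS (n : ℕ) (i : Fin n) : Emb n := ⟨({i}, ⊥), embedded_singleton n i⟩

/-- The atom `(∅, [ij])` of `ℰ^N`, where `[ij]` is the atom of the partition lattice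
whose unique non-singleton block is the pair `{i, j}`. -/
def atomP (n : ℕ) (i j : Fin n) : Emb n := ⟨(∅, modp n {i, j}), embedded_empty n _⟩

/-- A pair is an atom candidate: of the form `({i},P_⊥)` or `(∅,[ij])` with `i ≠ j`. -/
def IsAtomPair (n : ℕ) (a : XN n) : Prop :=
  (∃ i : Fin n, a = ({i}, ⊥)) ∨ ∃ i j : Fin n, i ≠ j ∧ a = (∅, modp n {i, j})

/-- The number of blocks `|P|` of a partition. -/
noncomputable def numBlocks {α : Type*} (P : Setoid α) : ℕ := P.classes.ncard

/-- The rank function `r(A,P) = (n − |P|) + min{|A|,1}` of `ℰ^N`. -/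
noncomputable def erank (n : ℕ) (x : XN n) : ℕ := (n - numBlocks x.2) + min x.1.ncard 1

/-- The partition `Q^S` of `S` induced by a partition `Q` of `N`. -/
def indPart {n : ℕ} (S : Set (Fin n)) (Q : Setoid (Fin n)) : Setoid S :=
  Setoid.comap Subtype.val Q

/-- `mu` is the Möbius function of the (finite) poset `α`. -/
def IsMobius {α : Type*} [PartialOrder α] (mu : α → α → ℤ) : Prop :=
  (∀ x, mu x x = 1) ∧
  (∀ x y, ¬x ≤ y → mu x y = 0) ∧
  (∀ x y, x < y → mu x y = -∑ᶠ z ∈ Set.Ico x y, mu x z)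

/-!
By Crapo's closure theorem, `μ_ℰ(⊥, ⊤)` is the sum of `μ_X(⊥, (A, P))` over the pairs with
`cl (A, P) = ⊤`, that is, over the partitions `P` and the sets `A` meeting every block of `P`.
The Möbius function of the product `X^N` factors as `(-1)^|A| · μ_𝒫(⊥, P)`, and by Rota's Galois
connection theorem for image and preimage under `N → N/P`, the signed count `∑ (-1)^|A|` of the
sets `A` meeting every block is `μ_{2^{N/P}}(∅, N/P) = (-1)^|P|`. What remains is
`∑_P μ_𝒫(⊥, P) (-1)^|P|`, the characteristic polynomial `∑_P μ_𝒫(⊥, P) x^|P| = x(x-1)⋯(x-n+1)`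
of the partition lattice at `x = -1`. Hence `μ_{ℰ^n} = (-1)^n n!`, and the recursion follows.
-/

open Finset IncidenceAlgebra

section Mobius

variable {α : Type*} [PartialOrder α] [OrderBot α] [LocallyFiniteOrder α] [DecidableEq α]

lemma eq_mu_bot_of_sum_Iic {𝕜 : Type*} [Ring 𝕜] {f : α → 𝕜}
    (hf : ∀ b, ∑ x ∈ Iic b, f x = if ⊥ = b then 1 else 0) (b : α) : f b = mu 𝕜 ⊥ b := by
  rw [moebius_inversion_bot f _ (fun x => (hf x).symm) b]
  simp

lemma IsMobius.sum_Iic_bot {mu' : α → α → ℤ} (h : IsMobius mu') (b : α) :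
    ∑ x ∈ Iic b, mu' ⊥ x = if ⊥ = b then 1 else 0 := by
  rcases eq_or_ne ⊥ b with rfl | hb
  · simp [h.1]
  · rw [if_neg hb, ← Icc_bot, ← Ico_insert_right bot_le, sum_insert right_notMem_Ico,
      h.2.2 _ _ (bot_lt_iff_ne_bot.2 hb.symm), ← finsum_mem_coe_finset, coe_Ico, neg_add_cancel]

lemma IsMobius.eq_mu_bot {mu' : α → α → ℤ} (h : IsMobius mu') (b : α) : mu' ⊥ b = mu ℤ ⊥ b :=
  eq_mu_bot_of_sum_Iic h.sum_Iic_bot b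

end Mobius

section GaloisConnection

variable {α β : Type*} [PartialOrder α] [PartialOrder β] [Fintype α] [DecidableEq β]
  {l : α → β} {u : β → α}

lemma GaloisConnection.sum_Iic_sum_fiber [LocallyFiniteOrderBot α] [LocallyFiniteOrderBot β]
    {M : Type*} [AddCommMonoid M] (gc : GaloisConnection l u)
    (f : α → M) (b : β) : ∑ e ∈ Iic b, ∑ x with l x = e, f x = ∑ x ∈ Iic (u b), f x := by
  rw [← sum_fiberwise_of_maps_to (g := l) (t := Iic b) fun x hx => ?_]
  · refine sum_congr rfl fun e he => sum_congr ?_ fun _ _ => rfl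
    ext x
    simp only [mem_filter, mem_univ, true_and, mem_Iic]
    exact ⟨fun h => ⟨gc.le_u (h ▸ mem_Iic.1 he), h⟩, And.right⟩
  · exact mem_Iic.2 (gc.l_le (mem_Iic.1 hx))

/-- A special case of Rota's Galois connection theorem. -/
theorem GaloisConnection.sum_fiber_mu_bot [OrderBot α] [OrderBot β] [LocallyFiniteOrder α]
    [LocallyFiniteOrder β] [DecidableEq α] {𝕜 : Type*} [Ring 𝕜] (gc : GaloisConnection l u)
    (hu : ∀ b, u b = ⊥ ↔ b = ⊥) (b : β) : ∑ x with l x = b, mu 𝕜 ⊥ x = mu 𝕜 ⊥ b := by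
  refine eq_mu_bot_of_sum_Iic (f := fun e => ∑ x with l x = e, mu 𝕜 ⊥ x) (fun e => ?_) b
  rw [gc.sum_Iic_sum_fiber, ← Icc_bot, sum_Icc_mu_right]
  exact if_congr (eq_comm.trans ((hu e).trans eq_comm)) rfl rfl

end GaloisConnection

/-- Crapo's closure theorem. -/
theorem ClosureOperator.mu_bot_eq_sum_fiber {L : Type*} [PartialOrder L] [OrderBot L] [Fintype L]
    [LocallyFiniteOrder L] [DecidableEq L] (c : ClosureOperator L) (hbot : c.IsClosed ⊥)
    {muE : c.Closeds → c.Closeds → ℤ} (hE : IsMobius muE) (d : c.Closeds) :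
    muE ⟨⊥, hbot⟩ d = ∑ x with c x = d, mu ℤ ⊥ x := by
  classical
  let : OrderBot c.Closeds := Subtype.orderBot hbot
  let : LocallyFiniteOrder c.Closeds := Fintype.toLocallyFiniteOrder
  have gc : GaloisConnection c.toCloseds Subtype.val := fun x e => e.2.closure_le_iff
  refine (hE.eq_mu_bot d).trans (Eq.trans ?_ (gc.sum_fiber_mu_bot (fun e => ?_) d)).symm
  · exact sum_congr (by ext; simp [ClosureOperator.toCloseds, Subtype.ext_iff]) fun _ _ => rfl
  · exact ⟨fun h => Subtype.ext h, congrArg Subtype.val⟩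

section SetLattice

variable {γ : Type*} [Fintype γ] [DecidableEq γ]

lemma Set.mu_empty [LocallyFiniteOrder (Set γ)] (A : Set γ) :
    mu ℤ (∅ : Set γ) A = (-1) ^ A.ncard := by
  classical
  refine (eq_mu_bot_of_sum_Iic (f := fun B : Set γ => (-1 : ℤ) ^ B.ncard) (fun B => ?_) A).symm
  have hB : ∑ C ∈ Finset.Iic B, (-1 : ℤ) ^ C.ncard = ∑ s ∈ B.toFinset.powerset, (-1) ^ s.card :=
    sum_nbij' (fun C => C.toFinset) (↑) (by simp) (by simp) (by simp) (by simp)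
      (by simp [Set.ncard_eq_toFinset_card'])
  rw [hB, sum_powerset_neg_one_pow_card]
  exact if_congr (by simpa [eq_comm] using Set.toFinset_eq_empty (s := B)) rfl rfl

lemma sum_image_eq_univ_neg_one_pow {δ : Type*} [Fintype δ] {q : γ → δ}
    (hq : Function.Surjective q) :
    ∑ A : Set γ with q '' A = Set.univ, (-1 : ℤ) ^ A.ncard = (-1) ^ Nat.card δ := by
  classical
  let : LocallyFiniteOrder (Set γ) := Fintype.toLocallyFiniteOrder
  let : LocallyFiniteOrder (Set δ) := Fintype.toLocallyFiniteOrder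
  have hu (T : Set δ) : q ⁻¹' T = ⊥ ↔ T = ⊥ := by
    simp [Set.preimage_eq_empty_iff, hq.range_eq]
  calc ∑ A : Set γ with q '' A = Set.univ, (-1 : ℤ) ^ A.ncard
      = ∑ A : Set γ with q '' A = Set.univ, mu ℤ ⊥ A :=
        sum_congr rfl fun A _ => (Set.mu_empty A).symm
    _ = mu ℤ ⊥ Set.univ := Set.image_preimage.sum_fiber_mu_bot hu _
    _ = (-1) ^ Nat.card δ := (Set.mu_empty _).trans (by rw [Set.ncard_univ])

end SetLattice

instance Setoid.instFinite {γ : Type*} [Finite γ] : Finite (Setoid γ) :=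
  Finite.of_injective (fun r : Setoid γ => ⇑r) fun _ _ => Setoid.eq_iff_rel_eq.2

noncomputable instance Setoid.instFintype {γ : Type*} [Finite γ] : Fintype (Setoid γ) :=
  Fintype.ofFinite _

lemma numBlocks_eq_card_quotient {γ : Type*} (P : Setoid γ) :
    numBlocks P = Nat.card (Quotient P) := by
  rw [numBlocks, ← Nat.card_coe_set_eq, Nat.card_congr P.quotientEquivClasses]

lemma Setoid.natCard_le_ker {γ : Type*} [Finite γ] (Q : Setoid γ) (x : ℕ) :
    Nat.card {f : γ → Fin x // Q ≤ Setoid.ker f} = x ^ numBlocks Q := by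
  rw [Nat.card_congr (Setoid.liftEquiv Q), Nat.card_fun, numBlocks_eq_card_quotient, Nat.card_fin]

section PartitionLattice

open Polynomial

variable {γ : Type*} [Fintype γ] [LocallyFiniteOrder (Setoid γ)] [DecidableEq (Setoid γ)]

lemma Setoid.sum_mu_bot_mul_pow_numBlocks (x : ℕ) :
    ∑ Q : Setoid γ, mu ℤ ⊥ Q * (x : ℤ) ^ numBlocks Q = x.descFactorial (Fintype.card γ) := by
  classical
  have hcount (Q : Setoid γ) : (x : ℤ) ^ numBlocks Q = #{f : γ → Fin x | Q ≤ Setoid.ker f} := by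
    rw [← Fintype.card_subtype, ← Nat.card_eq_fintype_card, Setoid.natCard_le_ker, Nat.cast_pow]
  calc ∑ Q : Setoid γ, mu ℤ ⊥ Q * (x : ℤ) ^ numBlocks Q
      = ∑ Q : Setoid γ, ∑ f : γ → Fin x with Q ≤ Setoid.ker f, mu ℤ ⊥ Q := by
        simp only [hcount, sum_const, nsmul_eq_mul, mul_comm]
    _ = ∑ f : γ → Fin x, ∑ Q ∈ Iic (Setoid.ker f), mu ℤ ⊥ Q := by
        rw [sum_comm' (t' := univ) (s' := fun f => Iic (Setoid.ker f))]
        simp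
    _ = ∑ f : γ → Fin x, if Function.Injective f then 1 else 0 := by
        refine sum_congr rfl fun f _ => ?_
        rw [← Icc_bot, sum_Icc_mu_right]
        exact if_congr (eq_comm.trans (Setoid.injective_iff_ker_bot f).symm) rfl rfl
    _ = x.descFactorial (Fintype.card γ) := by
        rw [sum_boole, ← Fintype.card_subtype, Fintype.card_congr
          (Equiv.subtypeInjectiveEquivEmbedding _ _), Fintype.card_embedding_eq, Fintype.card_fin]

lemma Setoid.sum_mu_bot_mul_neg_one_pow_numBlocks :
    ∑ Q : Setoid γ, mu ℤ ⊥ Q * (-1) ^ numBlocks Q =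
      (-1) ^ Fintype.card γ * (Fintype.card γ).factorial := by
  set p : ℤ[X] := ∑ Q : Setoid γ, C (mu ℤ ⊥ Q) * X ^ numBlocks Q
  have hp (t : ℤ) : p.eval t = ∑ Q : Setoid γ, mu ℤ ⊥ Q * t ^ numBlocks Q := by
    simp [p, eval_finsetSum]
  have hpoly : p = descPochhammer ℤ (Fintype.card γ) := by
    refine eq_of_infinite_eval_eq _ _
      ((Set.infinite_range_of_injective Nat.cast_injective).mono ?_)
    rintro _ ⟨x, rfl⟩
    simp only [Set.mem_ofPred_eq, hp, Setoid.sum_mu_bot_mul_pow_numBlocks,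
      descPochhammer_eval_eq_descFactorial]
  have hdesc := ascPochhammer_eval_neg_eq_descPochhammer ℤ (-1) (Fintype.card γ)
  rw [neg_neg, ascPochhammer_eval_one] at hdesc
  rw [← hp, hpoly, hdesc, ← mul_assoc, ← pow_add, ← two_mul, pow_mul, neg_one_sq, one_pow, one_mul]

end PartitionLattice

section EmbeddedSubsets

variable {n : ℕ}

lemma modp_le_iff {A : Set (Fin n)} {Q : Setoid (Fin n)} :
    modp n A ≤ Q ↔ ∀ a ∈ A, ∀ b ∈ A, Q a b := by
  refine ⟨fun h a ha b hb => h (Or.inr ⟨ha, hb⟩), fun h x y hxy => ?_⟩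
  rcases hxy with rfl | ⟨hx, hy⟩
  exacts [Q.refl' x, h x hx y hy]

lemma rel_sup_modp_of_mem {A : Set (Fin n)} (P : Setoid (Fin n)) {a b : Fin n} (ha : a ∈ A)
    (hb : b ∈ A) : (P ⊔ modp n A) a b :=
  modp_le_iff.1 le_sup_right a ha b hb

lemma le_embClosure (x : XN n) : x ≤ EmbClosure n x :=
  ⟨fun a ha => ⟨a, ha, Setoid.refl' _ a⟩, le_sup_left⟩

lemma embClosure_mono : Monotone (EmbClosure n) := by
  rintro ⟨A, P⟩ ⟨B, R⟩ ⟨hAB, hPR⟩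
  have hle : P ⊔ modp n A ≤ R ⊔ modp n B :=
    sup_le_sup hPR (modp_le_iff.2 fun a ha b hb => modp_le_iff.1 le_rfl a (hAB ha) b (hAB hb))
  exact ⟨fun y ⟨a, ha, hya⟩ => ⟨a, hAB ha, hle hya⟩, hle⟩

lemma embClosure_idem (x : XN n) : EmbClosure n (EmbClosure n x) = EmbClosure n x := by
  obtain ⟨A, P⟩ := x
  set Q := P ⊔ modp n A
  have hsup : Q ⊔ modp n {y | ∃ a ∈ A, Q y a} = Q := by
    refine sup_eq_left.2 (modp_le_iff.2 fun y ⟨a, ha, hya⟩ z ⟨b, hb, hzb⟩ => ?_)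
    exact Q.trans' hya (Q.trans' (rel_sup_modp_of_mem P ha hb) (Q.symm' hzb))
  show EmbClosure n ({y | ∃ a ∈ A, Q y a}, Q) = ({y | ∃ a ∈ A, Q y a}, Q)
  refine Prod.ext ?_ hsup
  show {y | ∃ b ∈ {y | ∃ a ∈ A, Q y a}, (Q ⊔ modp n _) y b} = _
  rw [hsup]
  ext y
  exact ⟨fun ⟨z, ⟨a, ha, hza⟩, hyz⟩ => ⟨a, ha, Q.trans' hyz hza⟩,
    fun hy => ⟨y, hy, Q.refl' y⟩⟩

def embClosure (n : ℕ) : ClosureOperator (XN n) :=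
  .mk' (EmbClosure n) embClosure_mono le_embClosure fun x => (embClosure_idem x).le

lemma embClosure_eq_top_iff (A : Set (Fin n)) (P : Setoid (Fin n)) :
    EmbClosure n (A, P) = (Set.univ, ⊤) ↔ ∀ u, ∃ a ∈ A, P u a := by
  refine ⟨fun h u => ?_, fun h => ?_⟩
  · have hu : u ∈ (EmbClosure n (A, P)).1 := h ▸ Set.mem_univ u
    obtain ⟨a, ha, hua⟩ := hu
    by_contra! hno
    -- The `P`-class of `u` misses `A`, so `P` and `P^A_⊥` both lie below the kernel of `P · u`.
    have hle : P ⊔ modp n A ≤ Setoid.ker (P · u) :=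
      sup_le (fun v w hvw => propext ⟨fun hv => P.trans' (P.symm' hvw) hv, P.trans' hvw⟩)
        (modp_le_iff.2 fun a ha b hb => propext (iff_of_false (hno a ha ∘ P.symm')
          (hno b hb ∘ P.symm')))
    exact hno a ha (P.symm' ((Setoid.ker_def.1 (hle hua)).mp (P.refl' u)))
  · have hrel (u : Fin n) (a : Fin n) (hua : P u a) : (P ⊔ modp n A) u a :=
      (le_sup_left : P ≤ P ⊔ modp n A) hua
    have htop : P ⊔ modp n A = ⊤ := eq_top_iff.2 fun u v _ => by
      obtain ⟨a, ha, hua⟩ := h u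
      obtain ⟨b, hb, hvb⟩ := h v
      exact Setoid.trans' _ (hrel u a hua)
        (Setoid.trans' _ (rel_sup_modp_of_mem P ha hb) (Setoid.symm' _ (hrel v b hvb)))
    refine Prod.ext (Set.eq_univ_of_forall fun u => ?_) htop
    obtain ⟨a, ha, hua⟩ := h u
    exact ⟨a, ha, hrel u a hua⟩

end EmbeddedSubsets

theorem mu_botE_topE (m : ℕ) {mu' : Emb m → Emb m → ℤ} (h : IsMobius mu') :
    mu' (botE m) (topE m) = (-1) ^ m * m.factorial := by
  classical
  let : LocallyFiniteOrder (Set (Fin m)) := Fintype.toLocallyFiniteOrder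
  let : LocallyFiniteOrder (Setoid (Fin m)) := Fintype.toLocallyFiniteOrder
  have hbot : (embClosure m).IsClosed ⊥ := embedded_empty m ⊥
  calc mu' (botE m) (topE m)
      = ∑ x : XN m with EmbClosure m x = (Set.univ, ⊤), mu ℤ ⊥ x :=
        (embClosure m).mu_bot_eq_sum_fiber hbot h (topE m)
    _ = ∑ P : Setoid (Fin m), mu ℤ ⊥ P *
          ∑ A : Set (Fin m) with Quotient.mk P '' A = Set.univ, (-1) ^ A.ncard := by
        rw [← mu_prod_mu, sum_filter, Fintype.sum_prod_type, sum_comm]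
        refine sum_congr rfl fun P _ => ?_
        rw [mul_sum, sum_filter]
        refine sum_congr rfl fun A _ => ?_
        have hcover : Quotient.mk P '' A = Set.univ ↔ ∀ u, ∃ a ∈ A, P u a := by
          simp [Set.eq_univ_iff_forall, Quotient.forall, Quotient.eq, Setoid.comm' P]
        refine if_congr ((embClosure_eq_top_iff A P).trans hcover.symm) ?_ rfl
        rw [IncidenceAlgebra.prod_apply, Prod.fst_bot, Prod.snd_bot, Set.bot_eq_empty,
          Set.mu_empty, mul_comm]
    _ = ∑ P : Setoid (Fin m), mu ℤ ⊥ P * (-1) ^ numBlocks P := by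
        simp only [sum_image_eq_univ_neg_one_pow Quotient.mk_surjective, numBlocks_eq_card_quotient]
    _ = (-1) ^ m * m.factorial := by
        rw [Setoid.sum_mu_bot_mul_neg_one_pow_numBlocks, Fintype.card_fin]

theorem mobius_recursion (n : ℕ) (hn : 1 ≤ n)
    (mu1 : Emb n → Emb n → ℤ) (mu2 : Emb (n - 1) → Emb (n - 1) → ℤ)
    (h1 : IsMobius mu1) (h2 : IsMobius mu2) :
    mu1 (botE n) (topE n) =
      -((-1) ^ (n - 1) * (Nat.factorial (n - 1) : ℤ) +
        ((n - 1 : ℕ) : ℤ) * mu2 (botE (n - 1)) (topE (n - 1))) := by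
  obtain ⟨k, rfl⟩ := Nat.exists_eq_add_of_le' hn
  rw [mu_botE_topE _ h1, mu_botE_topE _ h2, Nat.add_sub_cancel, Nat.factorial_succ]
  push_cast
  ring
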